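/- For every nonnegative integer n with 3 | p(n,3), the statistic λ₁ mod 3 (the largest part modulo 3) takes each value in {0,1,2} equally often among the partitions of n into exactly 3 positive parts. -/
import Mathlib

set_option maxRecDepth 100000
set_option maxHeartbeats 2000000

open Finset

/-- The set of partitions of `n` into exactly 3 positive parts, as triples
`(a, b, c)` with `a ≥ b ≥ c ≥ 1` and `a + b + c = n`. -/
def P3 (n : ℕ) : Finset (ℕ × ℕ × ℕ) :=
  (Finset.range (n+1) ×ˢ Finset.range (n+1) ×ˢ Finset.range (n+1)).filter
    (fun t => t.2.1 ≤ t.1 ∧ t.2.2 ≤ t.2.1 ∧ 1 ≤ t.2.2 ∧ t.1 + t.2.1 + t.2.2 = n)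

/-- `p3 n` is the number of partitions of `n` into exactly 3 positive parts. -/
def p3 (n : ℕ) : ℕ := (P3 n).card

lemma mem_P3 {n : ℕ} {t : ℕ × ℕ × ℕ} : t ∈ P3 n ↔
    t.2.1 ≤ t.1 ∧ t.2.2 ≤ t.2.1 ∧ 1 ≤ t.2.2 ∧ t.1 + t.2.1 + t.2.2 = n := by
  simp only [P3, Finset.mem_filter, Finset.mem_product, Finset.mem_range]
  omega

-- the leftover set in the step-6 recursion for the "small c" count has 6 elements
lemma Rcard (n i : ℕ) (hi : i < 3) :
    ((P3 (n+24)).filter (fun t => t.1 % 3 = i ∧ t.2.2 < 7 ∧ t.2.1 < t.2.2 + 3)).card = 6 := by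
  rw [show (6:ℕ) = (Finset.range 6).card by simp]
  symm
  apply Finset.card_bij (fun k _ =>
    ((n + 24 - (k+1 + (n + 2*i + k + 1) % 3) - (k+1), k+1 + (n + 2*i + k + 1) % 3, k+1) : ℕ×ℕ×ℕ))
  · intro k hk
    simp only [Finset.mem_range] at hk
    simp only [Finset.mem_filter, mem_P3]
    omega
  · intro a ha b hb hab
    simp only [Prod.mk.injEq] at hab
    omega
  · intro t ht
    simp only [Finset.mem_filter, mem_P3] at ht
    refine ⟨t.2.2 - 1, by simp only [Finset.mem_range]; omega, ?_⟩
    obtain ⟨a, b, c⟩ := t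
    simp only [Prod.mk.injEq] at *
    omega

-- small-c count: step of 6
lemma Bstep (n i : ℕ) (hi : i < 3) :
    ((P3 (n+24)).filter (fun t => t.1 % 3 = i ∧ t.2.2 < 7)).card
      = ((P3 (n+18)).filter (fun t => t.1 % 3 = i ∧ t.2.2 < 7)).card + 6 := by
  have hsplit : (((P3 (n+24)).filter (fun t => t.1 % 3 = i ∧ t.2.2 < 7)).filter
        (fun t => t.2.2 + 3 ≤ t.2.1)).card
      + (((P3 (n+24)).filter (fun t => t.1 % 3 = i ∧ t.2.2 < 7)).filter
        (fun t => ¬ (t.2.2 + 3 ≤ t.2.1))).card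
      = ((P3 (n+24)).filter (fun t => t.1 % 3 = i ∧ t.2.2 < 7)).card :=
    Finset.card_filter_add_card_filter_not _
  have h1 : (((P3 (n+24)).filter (fun t => t.1 % 3 = i ∧ t.2.2 < 7)).filter
      (fun t => t.2.2 + 3 ≤ t.2.1)).card
      = ((P3 (n+18)).filter (fun t => t.1 % 3 = i ∧ t.2.2 < 7)).card := by
    apply Finset.card_bij' (fun t _ => ((t.1 - 3, t.2.1 - 3, t.2.2) : ℕ×ℕ×ℕ))
      (fun t _ => ((t.1 + 3, t.2.1 + 3, t.2.2) : ℕ×ℕ×ℕ))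
    · intro t ht
      obtain ⟨a, b, c⟩ := t
      simp only [Finset.mem_filter, mem_P3] at *
      omega
    · intro t ht
      obtain ⟨a, b, c⟩ := t
      simp only [Finset.mem_filter, mem_P3] at *
      omega
    · intro t ht
      obtain ⟨a, b, c⟩ := t
      simp only [Finset.mem_filter, mem_P3] at ht
      simp only [Prod.mk.injEq]
      refine ⟨by omega, by omega, trivial⟩
    · intro t ht
      obtain ⟨a, b, c⟩ := t
      simp only [Finset.mem_filter, mem_P3] at ht
      simp only [Prod.mk.injEq]
      refine ⟨by omega, by omega, trivial⟩
  have h2 : (((P3 (n+24)).filter (fun t => t.1 % 3 = i ∧ t.2.2 < 7)).filter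
      (fun t => ¬ (t.2.2 + 3 ≤ t.2.1))).card = 6 := by
    rw [Finset.filter_filter]
    rw [← Rcard n i hi]
    congr 1
    apply Finset.filter_congr
    intro t _
    simp only [not_le, and_assoc]
  omega

lemma Bcount : ∀ (n i : ℕ), i < 3 →
    ((P3 (n+18)).filter (fun t => t.1 % 3 = i ∧ t.2.2 < 7)).card = n + 9
  | 0, i, hi => by interval_cases i <;> decide
  | 1, i, hi => by interval_cases i <;> decide
  | 2, i, hi => by interval_cases i <;> decide
  | 3, i, hi => by interval_cases i <;> decide
  | 4, i, hi => by interval_cases i <;> decide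
  | 5, i, hi => by interval_cases i <;> decide
  | (n+6), i, hi => by
      have h1 := Bcount n i hi
      have h2 := Bstep n i hi
      have e : n + 6 + 18 = n + 24 := by omega
      rw [e, h2, h1]

lemma Qshift (n i : ℕ) (hi : i < 3) :
    ((P3 (n+18)).filter (fun t => t.1 % 3 = i)).card
      = ((P3 n).filter (fun t => t.1 % 3 = i)).card + (n+9) := by
  have hsplit : (((P3 (n+18)).filter (fun t => t.1 % 3 = i)).filter
        (fun t => t.2.2 < 7)).card
      + (((P3 (n+18)).filter (fun t => t.1 % 3 = i)).filter
        (fun t => ¬ (t.2.2 < 7))).card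
      = ((P3 (n+18)).filter (fun t => t.1 % 3 = i)).card :=
    Finset.card_filter_add_card_filter_not _
  have h1 : (((P3 (n+18)).filter (fun t => t.1 % 3 = i)).filter
      (fun t => t.2.2 < 7)).card = n + 9 := by
    rw [Finset.filter_filter]
    exact Bcount n i hi
  have h2 : (((P3 (n+18)).filter (fun t => t.1 % 3 = i)).filter
      (fun t => ¬ (t.2.2 < 7))).card
      = ((P3 n).filter (fun t => t.1 % 3 = i)).card := by
    apply Finset.card_bij' (fun t _ => ((t.1 - 6, t.2.1 - 6, t.2.2 - 6) : ℕ×ℕ×ℕ))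
      (fun t _ => ((t.1 + 6, t.2.1 + 6, t.2.2 + 6) : ℕ×ℕ×ℕ))
    · intro t ht
      obtain ⟨a, b, c⟩ := t
      simp only [Finset.mem_filter, mem_P3] at *
      omega
    · intro t ht
      obtain ⟨a, b, c⟩ := t
      simp only [Finset.mem_filter, mem_P3] at *
      omega
    · intro t ht
      obtain ⟨a, b, c⟩ := t
      simp only [Finset.mem_filter, mem_P3] at ht
      simp only [Prod.mk.injEq]
      refine ⟨by omega, by omega, by omega⟩
    · intro t ht
      obtain ⟨a, b, c⟩ := t
      simp only [Finset.mem_filter, mem_P3] at ht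
      simp only [Prod.mk.injEq]
      refine ⟨by omega, by omega, by omega⟩
  omega

lemma p3eq (m : ℕ) : p3 m
    = ((P3 m).filter (fun t => t.1 % 3 = 0)).card
      + ((P3 m).filter (fun t => t.1 % 3 = 1)).card
      + ((P3 m).filter (fun t => t.1 % 3 = 2)).card := by
  have h := Finset.card_eq_sum_card_fiberwise (s := P3 m) (t := Finset.range 3)
    (f := fun t => t.1 % 3) (fun x _ => Finset.mem_range.2 (Nat.mod_lt _ (by norm_num)))
  simpa [p3, Finset.sum_range_succ, add_assoc] using h

lemma key (n : ℕ) : ∀ i, i < 3 → 3 ∣ p3 n →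
    ((P3 n).filter (fun t => t.1 % 3 = i)).card = p3 n / 3 := by
  induction n using Nat.strong_induction_on with
  | _ n ih =>
    rcases lt_or_ge n 18 with h18 | h18
    · interval_cases n <;> decide
    · obtain ⟨m, rfl⟩ : ∃ m, n = m + 18 := ⟨n - 18, by omega⟩
      intro i hi h
      have q0 := Qshift m 0 (by norm_num)
      have q1 := Qshift m 1 (by norm_num)
      have q2 := Qshift m 2 (by norm_num)
      have e1 := p3eq (m + 18)
      have e2 := p3eq m
      have hp : p3 (m + 18) = p3 m + 3 * (m + 9) := by omega
      have hdvd : 3 ∣ p3 m := by omega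
      have hk := ih m (by omega) i hi hdvd
      have qi := Qshift m i hi
      omega

theorem stmt16 (n : ℕ) (h : 3 ∣ p3 n) (i : ℕ) (hi : i < 3) :
    ((P3 n).filter (fun t => t.1 % 3 = i)).card = p3 n / 3 := by
  exact key n i hi h
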